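/- arXiv:2211.03864 — 5 statements merged into one kernel-verified Lean document; each statement's English description precedes it below -/
import Mathlib

section
/- Let M be a 2W×2W complex matrix satisfying Mᵀ J M = J, where J is the 2W×2W block matrix [[0, −1], [1, 0]]. Then M is invertible, every eigenvalue of Mᴴ M is a nonzero (positive real) number, and the spectrum of Mᴴ M is invariant under inversion: λ belongs to the spectrum of Mᴴ M if and only if λ⁻¹ does. -/
open Matrix

noncomputable section

/-- The standard symplectic form `J = [[0, -1], [1, 0]]` (W×W blocks). -/
def symJ (W : ℕ) : Matrix (Fin W ⊕ Fin W) (Fin W ⊕ Fin W) ℂ :=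
  Matrix.fromBlocks 0 (-1) 1 0

/-!
Since `symJ W` is Mathlib's `Matrix.J (Fin W) ℂ`, the hypothesis says `M ∈ Sp(2W, ℂ)`. This group
is closed under `ᴴ`, so `Mᴴ M` is itself symplectic. A symplectic matrix `A` is invertible with
`A⁻¹ = J⁻¹ Aᵀ J`, which is similar to `Aᵀ` and therefore has the spectrum of `A`; hence that
spectrum is closed under inversion. Positivity is the positive definiteness of `Mᴴ M` for
invertible `M`.
-/

open scoped ComplexOrder

namespace Matrix

theorem spectrum_transpose {n R : Type*} [Fintype n] [DecidableEq n] [CommRing R]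
    (A : Matrix n n R) : spectrum R Aᵀ = spectrum R A := by
  ext r
  rw [spectrum.mem_iff, spectrum.mem_iff, ← isUnit_transpose (algebraMap R _ r - A), transpose_sub,
    algebraMap_eq_diagonal, diagonal_transpose]

theorem PosDef.exists_pos_of_mem_spectrum {n 𝕜 : Type*} [Fintype n] [DecidableEq n] [RCLike 𝕜]
    {A : Matrix n n 𝕜} (hA : A.PosDef) {z : 𝕜} (hz : z ∈ spectrum 𝕜 A) :
    ∃ t : ℝ, 0 < t ∧ z = t := by
  rw [hA.isHermitian.spectrum_eq_image_range] at hz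
  obtain ⟨_, ⟨i, rfl⟩, rfl⟩ := hz
  exact ⟨_, hA.eigenvalues_pos i, rfl⟩

end Matrix

namespace SymplecticGroup

variable {l : Type*} [DecidableEq l] [Fintype l]

theorem conjTranspose_mem {R : Type*} [CommRing R] [StarRing R]
    {A : Matrix (l ⊕ l) (l ⊕ l) R} (hA : A ∈ symplecticGroup l R) :
    Aᴴ ∈ symplecticGroup l R :=
  transpose_mem (map_mem hA (starRingEnd R))

theorem inv_spectrum_eq {K : Type*} [Field K] {A : Matrix (l ⊕ l) (l ⊕ l) K}
    (hA : A ∈ symplecticGroup l K) : (spectrum K A)⁻¹ = spectrum K A := by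
  obtain ⟨u, rfl⟩ := (isUnit_iff_isUnit_det _).mpr (symplectic_det hA)
  let uJ : (Matrix (l ⊕ l) (l ⊕ l) K)ˣ :=
    ⟨J l K, -J l K, by simp [J_squared], by simp [J_squared]⟩
  have hinv : (u⁻¹).val = (uJ⁻¹).val * u.valᵀ * uJ.val := by
    rw [coe_units_inv, inv_eq_symplectic_inv _ hA]
    rfl
  rw [spectrum.map_inv, hinv, spectrum.units_conjugate', spectrum_transpose]

end SymplecticGroup

theorem stmt1 (W : ℕ) (M : Matrix (Fin W ⊕ Fin W) (Fin W ⊕ Fin W) ℂ)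
    (h : Mᵀ * symJ W * M = symJ W) :
    IsUnit M ∧
    (∀ lam ∈ spectrum ℂ (Mᴴ * M), ∃ t : ℝ, 0 < t ∧ lam = (t : ℂ)) ∧
    (∀ lam : ℂ, lam ∈ spectrum ℂ (Mᴴ * M) ↔ lam⁻¹ ∈ spectrum ℂ (Mᴴ * M)) := by
  have hM : M ∈ symplecticGroup (Fin W) ℂ := SymplecticGroup.mem_iff'.mpr h
  have hunit : IsUnit M := (isUnit_iff_isUnit_det M).mpr (SymplecticGroup.symplectic_det hM)
  have hMM : Mᴴ * M ∈ symplecticGroup (Fin W) ℂ :=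
    mul_mem (SymplecticGroup.conjTranspose_mem hM) hM
  have hpos : (Mᴴ * M).PosDef :=
    PosDef.conjTranspose_mul_self M (mulVec_injective_iff_isUnit.mpr hunit)
  refine ⟨hunit, fun lam hlam => hpos.exists_pos_of_mem_spectrum hlam, fun lam => ?_⟩
  rw [← Set.mem_inv, SymplecticGroup.inv_spectrum_eq hMM]
end
end

section
/- Let W ≥ 1, let V be a real symmetric W×W matrix, let R ≥ 16 and θ ∈ ℝ with |sin θ| ≥ R^{−1/2}, and set z = R e^{iθ}. Let a, b ∈ ℂ^W satisfy ‖b‖ ≤ 2 R^{−1/2} ‖a‖ (Euclidean norms), and define a′ = (z·1 − V) a − b and b′ = a. Then ‖b′‖ ≤ 2 R^{−1/2} ‖a′‖ and ‖a′‖ ≥ min( R − 2√R , (R |sin θ|)/2 ) · ‖a‖. In other words, the cone {(a,b) ∈ ℂ^{2W} : ‖b‖ ≤ 2R^{−1/2}‖a‖} is preserved by the transfer matrix [[z·1 − V, −1],[1, 0]], and the norm of the first coordinate is multiplied by at least min(R − 2√R, R|sin θ|/2). -/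
open Matrix

noncomputable section

/-! For a symmetric operator `T`, `⟪x, T x⟫` is real, so `Im ⟪x, (z - T) x⟫ = Im z ‖x‖²` and
Cauchy–Schwarz gives `‖(z - T) x‖ ≥ |Im z| ‖x‖`. For `z = R e^{iθ}` this expansion factor
`R |sin θ|` is at least `√R`, which dominates the perturbation `b` of size at most
`2 ‖a‖ / √R`: the first coordinate grows by at least half the factor, and that growth keeps
`(a', b')` in the cone. -/

theorem LinearMap.IsSymmetric.abs_im_mul_norm_le_norm_smul_sub {𝕜 E : Type*} [RCLike 𝕜]
    [NormedAddCommGroup E] [InnerProductSpace 𝕜 E] {T : E →ₗ[𝕜] E} (hT : T.IsSymmetric)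
    (z : 𝕜) (x : E) : |RCLike.im z| * ‖x‖ ≤ ‖z • x - T x‖ := by
  have him : RCLike.im (inner 𝕜 x (z • x - T x)) = RCLike.im z * ‖x‖ ^ 2 := by
    rw [inner_sub_right, inner_smul_right, inner_self_eq_norm_sq_to_K, map_sub,
      hT.im_inner_self_apply, sub_zero, ← RCLike.ofReal_pow, RCLike.im_mul_ofReal]
  have hcs : |RCLike.im z| * ‖x‖ ^ 2 ≤ ‖x‖ * ‖z • x - T x‖ := by
    calc |RCLike.im z| * ‖x‖ ^ 2 = |RCLike.im (inner 𝕜 x (z • x - T x))| := by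
          rw [him, abs_mul, abs_of_nonneg (sq_nonneg ‖x‖)]
      _ ≤ ‖inner 𝕜 x (z • x - T x)‖ := RCLike.abs_im_le_norm _
      _ ≤ ‖x‖ * ‖z • x - T x‖ := norm_inner_le_norm _ _
  rcases (norm_nonneg x).eq_or_lt with hx | hx
  · rw [← hx, mul_zero]
    exact norm_nonneg _
  · nlinarith

theorem half_mul_norm_le_norm_sub {E : Type*} [SeminormedAddCommGroup E] {u a b : E}
    {r c : ℝ} (hr : 4 ≤ r) (hc : r ≤ c) (hu : c * ‖a‖ ≤ ‖u‖) (hb : ‖b‖ ≤ 2 / r * ‖a‖) :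
    c / 2 * ‖a‖ ≤ ‖u - b‖ := by
  have hrc : 2 / r ≤ c / 2 := by
    rw [div_le_div_iff₀ (by linarith) two_pos]
    nlinarith
  calc c / 2 * ‖a‖ ≤ c * ‖a‖ - 2 / r * ‖a‖ := by nlinarith [norm_nonneg a]
    _ ≤ ‖u‖ - ‖b‖ := by linarith
    _ ≤ ‖u - b‖ := norm_sub_norm_le u b

theorem stmt4_general {W : ℕ} (V : Matrix (Fin W) (Fin W) ℝ) (hV : V.IsSymm)
    (R θ : ℝ) (hR : 16 ≤ R) (hθ : 1 / Real.sqrt R ≤ |Real.sin θ|)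
    (z : ℂ) (hz : z = (R : ℂ) * Complex.exp ((θ : ℂ) * Complex.I))
    (a b : EuclideanSpace ℂ (Fin W)) (hab : ‖b‖ ≤ 2 / Real.sqrt R * ‖a‖)
    (a' b' : EuclideanSpace ℂ (Fin W))
    (ha' : a' = Matrix.toEuclideanLin
      (z • (1 : Matrix (Fin W) (Fin W) ℂ) - V.map (Complex.ofReal ·)) a - b)
    (hb' : b' = a) :
    ‖b'‖ ≤ 2 / Real.sqrt R * ‖a'‖ ∧
    min (R - 2 * Real.sqrt R) (R * |Real.sin θ| / 2) * ‖a‖ ≤ ‖a'‖ := by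
  set r := Real.sqrt R
  have hr : 4 ≤ r := by
    rw [show (4 : ℝ) = Real.sqrt (4 ^ 2) by simp]
    exact Real.sqrt_le_sqrt (by linarith)
  have hrR : r * r = R := Real.mul_self_sqrt (by linarith)
  have hc : r ≤ R * |Real.sin θ| := by
    rw [← hrR, mul_assoc]
    have := (div_le_iff₀ (by linarith : (0 : ℝ) < r)).mp hθ
    nlinarith
  have hzim : |z.im| = R * |Real.sin θ| := by
    rw [hz, Complex.im_ofReal_mul, Complex.exp_ofReal_mul_I_im, abs_mul,
      abs_of_nonneg (by linarith)]
  have hVc : (V.map (Complex.ofReal ·)).IsHermitian :=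
    (isHermitian_iff_isSymm.mpr hV).map _ fun x => (Complex.conj_ofReal x).symm
  have hu := (isSymmetric_toEuclideanLin_iff.mpr hVc).abs_im_mul_norm_le_norm_smul_sub z a
  rw [RCLike.im_to_complex, hzim] at hu
  have ha'' : a' = (z • a - toEuclideanLin (V.map (Complex.ofReal ·)) a) - b := by
    simp [ha', toLpLin_apply]
  have hlow := ha'' ▸ half_mul_norm_le_norm_sub hr hc hu hab
  refine ⟨?_, (mul_le_mul_of_nonneg_right (min_le_right _ _) (norm_nonneg a)).trans hlow⟩
  rw [hb', div_mul_eq_mul_div, le_div_iff₀ (by linarith)]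
  nlinarith [norm_nonneg a]

theorem stmt4 {W : ℕ} (hW : 1 ≤ W) (V : Matrix (Fin W) (Fin W) ℝ) (hV : V.IsSymm)
    (R θ : ℝ) (hR : 16 ≤ R) (hθ : 1 / Real.sqrt R ≤ |Real.sin θ|)
    (z : ℂ) (hz : z = (R : ℂ) * Complex.exp ((θ : ℂ) * Complex.I))
    (a b : EuclideanSpace ℂ (Fin W)) (hab : ‖b‖ ≤ 2 / Real.sqrt R * ‖a‖)
    (a' b' : EuclideanSpace ℂ (Fin W))
    (ha' : a' = Matrix.toEuclideanLin
      (z • (1 : Matrix (Fin W) (Fin W) ℂ) - V.map (Complex.ofReal ·)) a - b)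
    (hb' : b' = a) :
    ‖b'‖ ≤ 2 / Real.sqrt R * ‖a'‖ ∧
    min (R - 2 * Real.sqrt R) (R * |Real.sin θ| / 2) * ‖a‖ ≤ ‖a'‖ :=
  stmt4_general V hV R θ hR hθ z hz a b hab a' b' ha' hb'
end
end

section
/- For every infinitely differentiable, compactly supported function φ : ℂ → ℝ, one has ∫_ℂ (1/n) 𝔼[ log ‖Φ_{n,ω}(z)‖ ] φ(z) dA(z) → ∫_ℂ γ₁(z) φ(z) dA(z) as n → ∞, where dA denotes Lebesgue measure on ℂ. (That is, the expected subharmonic functions (1/n) 𝔼 log ‖Φ_{n,·}(z)‖ converge to γ₁ in the sense of distributions.) -/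
open MeasureTheory Matrix Filter
open scoped ProbabilityTheory ENNReal Topology

noncomputable section

/-- Operator norm of a complex square matrix w.r.t. the Euclidean norm. -/
def opNormC {n : Type*} [Fintype n] [DecidableEq n] (M : Matrix n n ℂ) : ℝ :=
  ‖Matrix.toEuclideanCLM (𝕜 := ℂ) M‖

/-- Operator norm of a real square matrix w.r.t. the Euclidean norm. -/
def opNormR {n : Type*} [Fintype n] [DecidableEq n] (M : Matrix n n ℝ) : ℝ :=
  ‖Matrix.toEuclideanCLM (𝕜 := ℝ) M‖

/-- The one-step transfer matrix `T(z) = [[z·1 - V, -1], [1, 0]]`. -/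
def transfer {W : ℕ} (V : Matrix (Fin W) (Fin W) ℝ) (z : ℂ) :
    Matrix (Fin W ⊕ Fin W) (Fin W ⊕ Fin W) ℂ :=
  Matrix.fromBlocks (z • (1 : Matrix (Fin W) (Fin W) ℂ) - V.map (Complex.ofReal ·)) (-1) 1 0

/-- The transfer matrix cocycle `Φ_{n,ω}(z) = T_{n,ω}(z) ⋯ T_{1,ω}(z)`,
with `V_{m,ω} = F(T^m ω)`. -/
def Phi {Ω : Type*} (T : Ω → Ω) {W : ℕ} (F : Ω → Matrix (Fin W) (Fin W) ℝ) (ω : Ω) :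
    ℕ → ℂ → Matrix (Fin W ⊕ Fin W) (Fin W ⊕ Fin W) ℂ
  | 0, _ => 1
  | n + 1, z => transfer (F (T^[n+1] ω)) z * Phi T F ω n z

set_option maxHeartbeats 1000000
set_option synthInstance.maxHeartbeats 400000

section OpAux
variable {𝕜 : Type*} [RCLike 𝕜] {n : Type*} [Fintype n] [DecidableEq n]

lemma toEuclideanCLM_piLp_equiv_symm (A : Matrix n n 𝕜) (x : n → 𝕜) :
    toEuclideanCLM (𝕜 := 𝕜) A ((WithLp.equiv 2 (n → 𝕜)).symm x)
      = (WithLp.equiv 2 (n → 𝕜)).symm (toLin' A x) := rfl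

lemma WithLp.equiv_symm_single (i : n) (a : 𝕜) :
    (WithLp.equiv 2 (n → 𝕜)).symm (Pi.single i a) = EuclideanSpace.single i a :=
  EuclideanSpace.toLp_single i a

lemma euclid_coord_le_norm (x : EuclideanSpace 𝕜 n) (i : n) : ‖x i‖ ≤ ‖x‖ := by
  have h := norm_inner_le_norm (𝕜 := 𝕜) (EuclideanSpace.single i (1:𝕜)) x
  simpa [EuclideanSpace.inner_single_left, EuclideanSpace.norm_single] using h

lemma opN_mul_le (A B : Matrix n n 𝕜) :
    ‖toEuclideanCLM (𝕜 := 𝕜) (A * B)‖ ≤ ‖toEuclideanCLM (𝕜 := 𝕜) A‖ * ‖toEuclideanCLM (𝕜 := 𝕜) B‖ := by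
  rw [_root_.map_mul]; exact norm_mul_le _ _

lemma opN_entry_le (A : Matrix n n 𝕜) (i j : n) : ‖A i j‖ ≤ ‖toEuclideanCLM (𝕜 := 𝕜) A‖ := by
  have h := (toEuclideanCLM (𝕜 := 𝕜) A).le_opNorm ((WithLp.equiv 2 (n → 𝕜)).symm (Pi.single j 1))
  rw [toEuclideanCLM_piLp_equiv_symm, WithLp.equiv_symm_single, EuclideanSpace.norm_single,
    norm_one, mul_one] at h
  refine le_trans ?_ (le_trans (euclid_coord_le_norm _ i) h)
  simp [Matrix.toLin'_apply, Matrix.mulVec_single]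

lemma opN_std_le (i j : n) (c : 𝕜) :
    ‖toEuclideanCLM (𝕜 := 𝕜) (Matrix.single i j c)‖ ≤ ‖c‖ := by
  refine ContinuousLinearMap.opNorm_le_bound _ (norm_nonneg c) fun x => ?_
  have hx : x = (WithLp.equiv 2 (n → 𝕜)).symm (WithLp.equiv 2 (n → 𝕜) x) := rfl
  rw [hx, toEuclideanCLM_piLp_equiv_symm]
  have hmv : toLin' (Matrix.single i j c) (WithLp.equiv 2 (n → 𝕜) x)
      = Pi.single i (c * (WithLp.equiv 2 (n → 𝕜) x) j) := by
    rw [toLin'_apply]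
    ext k
    simp [Matrix.mulVec, dotProduct, Matrix.single, Pi.single_apply, ite_and, eq_comm]
  rw [hmv, WithLp.equiv_symm_single, EuclideanSpace.norm_single, norm_mul]
  exact mul_le_mul_of_nonneg_left (euclid_coord_le_norm x j) (norm_nonneg c)

lemma opN_le_sum (A : Matrix n n 𝕜) :
    ‖toEuclideanCLM (𝕜 := 𝕜) A‖ ≤ ∑ i, ∑ j, ‖A i j‖ := by
  conv_lhs => rw [matrix_eq_sum_single A, map_sum]
  refine le_trans (norm_sum_le _ _) (Finset.sum_le_sum fun i _ => ?_)
  rw [map_sum]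
  exact le_trans (norm_sum_le _ _) (Finset.sum_le_sum fun j _ => opN_std_le i j _)

lemma opN_map_star_le (A : Matrix n n 𝕜) :
    ‖toEuclideanCLM (𝕜 := 𝕜) (A.map star)‖ ≤ ‖toEuclideanCLM (𝕜 := 𝕜) A‖ := by
  refine ContinuousLinearMap.opNorm_le_bound _ (norm_nonneg _) fun x => ?_
  have hx : x = (WithLp.equiv 2 (n → 𝕜)).symm (WithLp.equiv 2 (n → 𝕜) x) := rfl
  set v : n → 𝕜 := WithLp.equiv 2 (n → 𝕜) x with hv
  have hnorm : ∀ w : n → 𝕜, ‖(WithLp.equiv 2 (n → 𝕜)).symm (star w)‖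
      = ‖(WithLp.equiv 2 (n → 𝕜)).symm w‖ := by
    intro w
    simp [EuclideanSpace.norm_eq]
  have hmv : (A.map star) *ᵥ v = star (A *ᵥ (star v)) := by
    ext k
    simp only [Matrix.mulVec, dotProduct, Matrix.map_apply, Pi.star_apply, star_sum, star_mul',
      star_star]
  rw [hx, toEuclideanCLM_piLp_equiv_symm, toLin'_apply, hmv, hnorm]
  have h2 := (toEuclideanCLM (𝕜 := 𝕜) A).le_opNorm ((WithLp.equiv 2 (n → 𝕜)).symm (star v))
  rw [toEuclideanCLM_piLp_equiv_symm, toLin'_apply, hnorm] at h2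
  exact h2

lemma opN_map_star (A : Matrix n n 𝕜) :
    ‖toEuclideanCLM (𝕜 := 𝕜) (A.map star)‖ = ‖toEuclideanCLM (𝕜 := 𝕜) A‖ := by
  refine le_antisymm (opN_map_star_le A) ?_
  have h := opN_map_star_le (A.map star)
  rwa [show (A.map star).map star = A by ext i j; simp] at h

lemma opN_conjTranspose (A : Matrix n n 𝕜) :
    ‖toEuclideanCLM (𝕜 := 𝕜) Aᴴ‖ = ‖toEuclideanCLM (𝕜 := 𝕜) A‖ := by
  rw [show Aᴴ = star A from rfl, map_star, ContinuousLinearMap.star_eq_adjoint]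
  exact ContinuousLinearMap.adjoint.norm_map _

lemma opN_transpose (A : Matrix n n 𝕜) :
    ‖toEuclideanCLM (𝕜 := 𝕜) Aᵀ‖ = ‖toEuclideanCLM (𝕜 := 𝕜) A‖ := by
  rw [show Aᵀ = (A.map star)ᴴ by ext i j; simp, opN_conjTranspose, opN_map_star]

end OpAux

/-- The standard symplectic-type matrix. -/
def Jmat (W : ℕ) : Matrix (Fin W ⊕ Fin W) (Fin W ⊕ Fin W) ℂ :=
  Matrix.fromBlocks 0 (-1) 1 0

lemma opNC_mul_le {n : Type*} [Fintype n] [DecidableEq n] (A B : Matrix n n ℂ) :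
    opNormC (A * B) ≤ opNormC A * opNormC B := opN_mul_le A B

lemma transfer_symp {W : ℕ} {V : Matrix (Fin W) (Fin W) ℝ} (hV : V.IsSymm) (z : ℂ) :
    (transfer V z)ᵀ * Jmat W * transfer V z = Jmat W := by
  have hA : (z • (1 : Matrix (Fin W) (Fin W) ℂ) - V.map (Complex.ofReal ·))ᵀ
      = z • (1 : Matrix (Fin W) (Fin W) ℂ) - V.map (Complex.ofReal ·) := by
    rw [Matrix.transpose_sub, Matrix.transpose_smul, Matrix.transpose_one, ← Matrix.transpose_map]
    rw [show Vᵀ = V from hV]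
  simp only [transfer, Jmat, Matrix.fromBlocks_transpose, Matrix.fromBlocks_multiply, hA,
    Matrix.transpose_neg, Matrix.transpose_one, Matrix.transpose_zero, Matrix.mul_zero,
    Matrix.zero_mul, Matrix.mul_one, Matrix.one_mul, Matrix.mul_neg, Matrix.neg_mul, neg_neg,
    add_zero, zero_add, neg_zero, add_neg_cancel]

lemma one_le_opN_of_symp {W : ℕ} (hW : 1 ≤ W) {M : Matrix (Fin W ⊕ Fin W) (Fin W ⊕ Fin W) ℂ}
    (h : Mᵀ * Jmat W * M = Jmat W) : 1 ≤ opNormC M := by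
  have hJpos : 0 < opNormC (Jmat W) := by
    rcases (norm_nonneg (Matrix.toEuclideanCLM (𝕜 := ℂ) (Jmat W))).lt_or_eq with h' | h'
    · exact h'
    · exfalso
      have h0 : Matrix.toEuclideanCLM (𝕜 := ℂ) (Jmat W) = 0 := by
        rw [← norm_eq_zero]; exact h'.symm
      have hJ0 : Jmat W = 0 := by
        have : Matrix.toEuclideanCLM (𝕜 := ℂ) (Jmat W)
            = Matrix.toEuclideanCLM (𝕜 := ℂ) (0 : Matrix (Fin W ⊕ Fin W) (Fin W ⊕ Fin W) ℂ) := by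
          rw [h0, _root_.map_zero]
        exact (Matrix.toEuclideanCLM (𝕜 := ℂ) (n := Fin W ⊕ Fin W)).injective this
      have := congrFun (congrFun hJ0 (Sum.inl ⟨0, hW⟩)) (Sum.inr ⟨0, hW⟩)
      simp [Jmat, Matrix.fromBlocks] at this
  have hle : opNormC (Jmat W) ≤ opNormC M * opNormC M * opNormC (Jmat W) := by
    calc opNormC (Jmat W) = opNormC (Mᵀ * Jmat W * M) := by rw [h]
    _ ≤ opNormC (Mᵀ * Jmat W) * opNormC M := opNC_mul_le _ _
    _ ≤ opNormC Mᵀ * opNormC (Jmat W) * opNormC M := by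
        exact mul_le_mul_of_nonneg_right (opNC_mul_le _ _) (norm_nonneg _)
    _ = opNormC M * opNormC M * opNormC (Jmat W) := by
        rw [show opNormC Mᵀ = opNormC M from opN_transpose M]; ring
  have hM0 : 0 ≤ opNormC M := norm_nonneg _
  have hx2 : 1 ≤ opNormC M * opNormC M := by nlinarith [hle, hJpos]
  nlinarith [hx2, hM0]

lemma Phi_symp {Ω : Type*} (T : Ω → Ω) {W : ℕ} (F : Ω → Matrix (Fin W) (Fin W) ℝ)
    (hFsymm : ∀ ω, (F ω).IsSymm) (ω : Ω) (n : ℕ) (z : ℂ) :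
    (Phi T F ω n z)ᵀ * Jmat W * Phi T F ω n z = Jmat W := by
  induction n with
  | zero => simp [Phi]
  | succ n ih =>
      show (transfer (F (T^[n+1] ω)) z * Phi T F ω n z)ᵀ * Jmat W
        * (transfer (F (T^[n+1] ω)) z * Phi T F ω n z) = Jmat W
      rw [Matrix.transpose_mul]
      calc (Phi T F ω n z)ᵀ * (transfer (F (T^[n+1] ω)) z)ᵀ * Jmat W
            * (transfer (F (T^[n+1] ω)) z * Phi T F ω n z)
          = (Phi T F ω n z)ᵀ * ((transfer (F (T^[n+1] ω)) z)ᵀ * Jmat W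
            * transfer (F (T^[n+1] ω)) z) * Phi T F ω n z := by
            simp only [Matrix.mul_assoc]
        _ = (Phi T F ω n z)ᵀ * Jmat W * Phi T F ω n z := by
            rw [transfer_symp (hFsymm _) z]
        _ = Jmat W := ih

lemma one_le_opN_Phi {Ω : Type*} (T : Ω → Ω) {W : ℕ} (hW : 1 ≤ W)
    (F : Ω → Matrix (Fin W) (Fin W) ℝ) (hFsymm : ∀ ω, (F ω).IsSymm) (ω : Ω) (n : ℕ) (z : ℂ) :
    1 ≤ opNormC (Phi T F ω n z) :=
  one_le_opN_of_symp hW (Phi_symp T F hFsymm ω n z)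

lemma one_le_opN_transfer {W : ℕ} (hW : 1 ≤ W) {V : Matrix (Fin W) (Fin W) ℝ}
    (hV : V.IsSymm) (z : ℂ) : 1 ≤ opNormC (transfer V z) :=
  one_le_opN_of_symp hW (transfer_symp hV z)

lemma opNR_nonneg {W : ℕ} (V : Matrix (Fin W) (Fin W) ℝ) : 0 ≤ opNormR V := norm_nonneg _

lemma transfer_entry_le {W : ℕ} (V : Matrix (Fin W) (Fin W) ℝ) (z : ℂ)
    (i j : Fin W ⊕ Fin W) : ‖transfer V z i j‖ ≤ ‖z‖ + opNormR V + 1 := by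
  have hV0 : 0 ≤ opNormR V := opNR_nonneg V
  have hz0 : 0 ≤ ‖z‖ := norm_nonneg z
  cases i with
  | inl a =>
    cases j with
    | inl b =>
        have h1 : ‖transfer V z (Sum.inl a) (Sum.inl b)‖
            = ‖z * (1 : Matrix (Fin W) (Fin W) ℂ) a b - (V a b : ℂ)‖ := by
          simp [transfer, Matrix.fromBlocks_apply₁₁, Matrix.sub_apply, Matrix.smul_apply,
            smul_eq_mul, Matrix.map_apply]
        rw [h1]
        refine le_trans (norm_sub_le _ _) ?_
        have h2 : ‖z * (1 : Matrix (Fin W) (Fin W) ℂ) a b‖ ≤ ‖z‖ := by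
          rw [norm_mul]
          rcases eq_or_ne a b with h | h <;>
            simp [Matrix.one_apply, h]
        have h3 : ‖((V a b : ℝ) : ℂ)‖ ≤ opNormR V := by
          rw [Complex.norm_real]
          exact opN_entry_le V a b
        linarith
    | inr b =>
        have h1 : ‖transfer V z (Sum.inl a) (Sum.inr b)‖
            = ‖(-1 : Matrix (Fin W) (Fin W) ℂ) a b‖ := by
          simp [transfer, Matrix.fromBlocks_apply₁₂]
        rw [h1]
        rcases eq_or_ne a b with h | h <;>
          simp [Matrix.one_apply, h] <;> positivity
  | inr a =>
    cases j with
    | inl b =>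
        have h1 : ‖transfer V z (Sum.inr a) (Sum.inl b)‖
            = ‖(1 : Matrix (Fin W) (Fin W) ℂ) a b‖ := by
          simp [transfer, Matrix.fromBlocks_apply₂₁]
        rw [h1]
        rcases eq_or_ne a b with h | h <;>
          simp [Matrix.one_apply, h] <;> positivity
    | inr b =>
        have h1 : ‖transfer V z (Sum.inr a) (Sum.inr b)‖ = 0 := by
          simp [transfer, Matrix.fromBlocks_apply₂₂]
        rw [h1]; linarith

lemma transfer_opN_le {W : ℕ} (V : Matrix (Fin W) (Fin W) ℝ) (z : ℂ) :
    opNormC (transfer V z) ≤ (2 * W : ℝ)^2 * (‖z‖ + opNormR V + 1) := by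
  refine le_trans (opN_le_sum _) ?_
  have hcard : (Fintype.card (Fin W ⊕ Fin W) : ℝ) = 2 * W := by
    simp [Fintype.card_sum]; ring
  have h : ∀ i : Fin W ⊕ Fin W, ∑ j, ‖transfer V z i j‖
      ≤ (2 * W : ℝ) * (‖z‖ + opNormR V + 1) := by
    intro i
    calc ∑ j, ‖transfer V z i j‖ ≤ ∑ _j : Fin W ⊕ Fin W, (‖z‖ + opNormR V + 1) :=
          Finset.sum_le_sum fun j _ => transfer_entry_le V z i j
      _ = (2 * W : ℝ) * (‖z‖ + opNormR V + 1) := by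
          rw [Finset.sum_const, Finset.card_univ, nsmul_eq_mul, hcard]
  calc ∑ i, ∑ j, ‖transfer V z i j‖ ≤ ∑ _i : Fin W ⊕ Fin W, (2 * W : ℝ) * (‖z‖ + opNormR V + 1) :=
        Finset.sum_le_sum fun i _ => h i
    _ = (2 * W : ℝ)^2 * (‖z‖ + opNormR V + 1) := by
        rw [Finset.sum_const, Finset.card_univ, nsmul_eq_mul, hcard]; ring

lemma log_max_one {x : ℝ} (hx : 0 ≤ x) : Real.log (max 1 x) = max (Real.log x) 0 := by
  rcases le_total x 1 with h | h
  · rw [max_eq_left h, Real.log_one, max_eq_right (Real.log_nonpos hx h)]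
  · rw [max_eq_right h, max_eq_left (Real.log_nonneg h)]

lemma log_transfer_le {W : ℕ} (hW : 1 ≤ W) {V : Matrix (Fin W) (Fin W) ℝ} (hV : V.IsSymm)
    (z : ℂ) : Real.log (opNormC (transfer V z))
      ≤ Real.log ((2 * W : ℝ)^2 * 2 * (‖z‖ + 1)) + max (Real.log (opNormR V)) 0 := by
  have hV0 : 0 ≤ opNormR V := opNR_nonneg V
  have hz0 : 0 ≤ ‖z‖ := norm_nonneg z
  have hW1 : (1 : ℝ) ≤ (2 * W : ℝ)^2 := by
    have : (1 : ℝ) ≤ (W : ℝ) := by exact_mod_cast hW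
    nlinarith
  have hmax1 : (1 : ℝ) ≤ max 1 (opNormR V) := le_max_left _ _
  have hmaxV : opNormR V ≤ max 1 (opNormR V) := le_max_right _ _
  have hCpos : (0 : ℝ) < (2 * W : ℝ)^2 * 2 * (‖z‖ + 1) := by nlinarith
  have hbound : opNormC (transfer V z)
      ≤ ((2 * W : ℝ)^2 * 2 * (‖z‖ + 1)) * max 1 (opNormR V) := by
    refine le_trans (transfer_opN_le V z) ?_
    have h1 : (‖z‖ + 1) ≤ (‖z‖ + 1) * max 1 (opNormR V) :=
      le_mul_of_one_le_right (by linarith) hmax1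
    have h2 : opNormR V ≤ (‖z‖ + 1) * max 1 (opNormR V) :=
      le_trans hmaxV (le_mul_of_one_le_left (le_trans zero_le_one hmax1) (by linarith))
    have key : ‖z‖ + opNormR V + 1 ≤ 2 * (‖z‖ + 1) * max 1 (opNormR V) := by linarith
    calc (2 * W : ℝ)^2 * (‖z‖ + opNormR V + 1)
        ≤ (2 * W : ℝ)^2 * (2 * (‖z‖ + 1) * max 1 (opNormR V)) :=
          mul_le_mul_of_nonneg_left key (by positivity)
      _ = (2 * W : ℝ)^2 * 2 * (‖z‖ + 1) * max 1 (opNormR V) := by ring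
  have hpos : 0 < opNormC (transfer V z) :=
    lt_of_lt_of_le one_pos (one_le_opN_transfer hW hV z)
  calc Real.log (opNormC (transfer V z))
      ≤ Real.log (((2 * W : ℝ)^2 * 2 * (‖z‖ + 1)) * max 1 (opNormR V)) :=
        Real.log_le_log hpos hbound
    _ = Real.log ((2 * W : ℝ)^2 * 2 * (‖z‖ + 1)) + Real.log (max 1 (opNormR V)) :=
        Real.log_mul (ne_of_gt hCpos) (by positivity)
    _ = Real.log ((2 * W : ℝ)^2 * 2 * (‖z‖ + 1)) + max (Real.log (opNormR V)) 0 := by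
        rw [log_max_one hV0]

lemma Phi_zero {Ω : Type*} (T : Ω → Ω) {W : ℕ} (F : Ω → Matrix (Fin W) (Fin W) ℝ) (ω : Ω)
    (z : ℂ) : Phi T F ω 0 z = 1 := rfl

lemma Phi_succ {Ω : Type*} (T : Ω → Ω) {W : ℕ} (F : Ω → Matrix (Fin W) (Fin W) ℝ) (ω : Ω)
    (n : ℕ) (z : ℂ) : Phi T F ω (n+1) z = transfer (F (T^[n+1] ω)) z * Phi T F ω n z := rfl

lemma log_Phi_le {Ω : Type*} (T : Ω → Ω) {W : ℕ} (hW : 1 ≤ W)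
    (F : Ω → Matrix (Fin W) (Fin W) ℝ) (hFsymm : ∀ ω, (F ω).IsSymm) (ω : Ω) (z : ℂ) (n : ℕ) :
    Real.log (opNormC (Phi T F ω n z))
      ≤ ∑ m ∈ Finset.range n, (Real.log ((2 * W : ℝ)^2 * 2 * (‖z‖ + 1))
          + max (Real.log (opNormR (F (T^[m+1] ω)))) 0) := by
  induction n with
  | zero =>
      rw [Phi_zero, Finset.range_zero, Finset.sum_empty]
      refine Real.log_nonpos (norm_nonneg _) ?_
      show ‖Matrix.toEuclideanCLM (𝕜 := ℂ) (1 : Matrix (Fin W ⊕ Fin W) (Fin W ⊕ Fin W) ℂ)‖ ≤ 1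
      rw [_root_.map_one]
      exact ContinuousLinearMap.norm_id_le
  | succ n ih =>
      have h1 : (1:ℝ) ≤ opNormC (Phi T F ω (n+1) z) := one_le_opN_Phi T hW F hFsymm ω (n+1) z
      have h2 : (1:ℝ) ≤ opNormC (transfer (F (T^[n+1] ω)) z) :=
        one_le_opN_transfer hW (hFsymm _) z
      have h3 : (1:ℝ) ≤ opNormC (Phi T F ω n z) := one_le_opN_Phi T hW F hFsymm ω n z
      calc Real.log (opNormC (Phi T F ω (n+1) z))
          ≤ Real.log (opNormC (transfer (F (T^[n+1] ω)) z) * opNormC (Phi T F ω n z)) := by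
            refine Real.log_le_log (lt_of_lt_of_le one_pos h1) ?_
            rw [Phi_succ]
            exact opNC_mul_le _ _
        _ = Real.log (opNormC (transfer (F (T^[n+1] ω)) z))
            + Real.log (opNormC (Phi T F ω n z)) :=
            Real.log_mul (by linarith) (by linarith)
        _ ≤ (Real.log ((2 * W : ℝ)^2 * 2 * (‖z‖ + 1))
              + max (Real.log (opNormR (F (T^[n+1] ω)))) 0)
            + ∑ m ∈ Finset.range n, (Real.log ((2 * W : ℝ)^2 * 2 * (‖z‖ + 1))
              + max (Real.log (opNormR (F (T^[m+1] ω)))) 0) := by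
            exact add_le_add (log_transfer_le hW (hFsymm _) z) ih
        _ = ∑ m ∈ Finset.range (n+1), (Real.log ((2 * W : ℝ)^2 * 2 * (‖z‖ + 1))
              + max (Real.log (opNormR (F (T^[m+1] ω)))) 0) := by
            rw [Finset.sum_range_succ]; ring

section Meas
variable {ι : Type*} [Fintype ι] [DecidableEq ι]

/-- The operator norm as a function of the entries. -/
def matNormFun : (ι → ι → ℂ) → ℝ := fun f => opNormC (Matrix.of f)

lemma matNormFun_continuous : Continuous (matNormFun (ι := ι)) := by
  let L : (ι → ι → ℂ) →ₗ[ℂ] (EuclideanSpace ℂ ι →L[ℂ] EuclideanSpace ℂ ι) :=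
    { toFun := fun f => Matrix.toEuclideanCLM (𝕜 := ℂ) (Matrix.of f)
      map_add' := fun f g => by
        show Matrix.toEuclideanCLM (𝕜 := ℂ) (Matrix.of f + Matrix.of g) = _
        rw [_root_.map_add]
      map_smul' := fun c f => by
        show Matrix.toEuclideanCLM (𝕜 := ℂ) (c • Matrix.of f) = _
        rw [_root_.map_smul]; rfl }
  have hL : Continuous L := L.continuous_of_finiteDimensional
  exact continuous_norm.comp hL

end Meas

lemma transfer_apply₁₁ {W : ℕ} (V : Matrix (Fin W) (Fin W) ℝ) (z : ℂ) (a b : Fin W) :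
    transfer V z (Sum.inl a) (Sum.inl b)
      = z * (1 : Matrix (Fin W) (Fin W) ℂ) a b - ((V a b : ℝ) : ℂ) := by
  simp [transfer, Matrix.fromBlocks_apply₁₁, Matrix.sub_apply, Matrix.smul_apply, smul_eq_mul,
    Matrix.map_apply]

lemma transfer_apply₁₂ {W : ℕ} (V : Matrix (Fin W) (Fin W) ℝ) (z : ℂ) (a b : Fin W) :
    transfer V z (Sum.inl a) (Sum.inr b) = (-1 : Matrix (Fin W) (Fin W) ℂ) a b := rfl

lemma transfer_apply₂₁ {W : ℕ} (V : Matrix (Fin W) (Fin W) ℝ) (z : ℂ) (a b : Fin W) :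
    transfer V z (Sum.inr a) (Sum.inl b) = (1 : Matrix (Fin W) (Fin W) ℂ) a b := rfl

lemma transfer_apply₂₂ {W : ℕ} (V : Matrix (Fin W) (Fin W) ℝ) (z : ℂ) (a b : Fin W) :
    transfer V z (Sum.inr a) (Sum.inr b) = 0 := rfl

lemma measurable_transfer_entry {Ω : Type*} [MeasurableSpace Ω] {W : ℕ} (T : Ω → Ω)
    (hT : Measurable T) (F : Ω → Matrix (Fin W) (Fin W) ℝ)
    (hFmeas : ∀ i j, Measurable fun ω => F ω i j) (m : ℕ) (i j : Fin W ⊕ Fin W) :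
    Measurable fun p : ℂ × Ω => transfer (F (T^[m] p.2)) p.1 i j := by
  have hTm : Measurable (T^[m]) := hT.iterate m
  cases i with
  | inl a =>
    cases j with
    | inl b =>
        simp only [transfer_apply₁₁]
        exact (measurable_fst.mul measurable_const).sub
          (Complex.measurable_ofReal.comp ((hFmeas a b).comp (hTm.comp measurable_snd)))
    | inr b =>
        simp only [transfer_apply₁₂]; exact measurable_const
  | inr a =>
    cases j with
    | inl b =>
        simp only [transfer_apply₂₁]; exact measurable_const
    | inr b =>
        simp only [transfer_apply₂₂]; exact measurable_const

lemma measurable_Phi_entry {Ω : Type*} [MeasurableSpace Ω] {W : ℕ} (T : Ω → Ω)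
    (hT : Measurable T) (F : Ω → Matrix (Fin W) (Fin W) ℝ)
    (hFmeas : ∀ i j, Measurable fun ω => F ω i j) (n : ℕ) (i j : Fin W ⊕ Fin W) :
    Measurable fun p : ℂ × Ω => Phi T F p.2 n p.1 i j := by
  induction n generalizing i j with
  | zero =>
      simp only [Phi_zero]; exact measurable_const
  | succ n ih =>
      simp only [Phi_succ, Matrix.mul_apply]
      exact Finset.measurable_sum _ fun k _ =>
        (measurable_transfer_entry T hT F hFmeas (n+1) i k).mul (ih k j)

lemma measurable_logPhi {Ω : Type*} [MeasurableSpace Ω] {W : ℕ} (T : Ω → Ω)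
    (hT : Measurable T) (F : Ω → Matrix (Fin W) (Fin W) ℝ)
    (hFmeas : ∀ i j, Measurable fun ω => F ω i j) (n : ℕ) :
    Measurable fun p : ℂ × Ω => Real.log (opNormC (Phi T F p.2 n p.1)) := by
  have h1 : Measurable fun p : ℂ × Ω => (fun i j => Phi T F p.2 n p.1 i j) :=
    measurable_pi_lambda _ fun i => measurable_pi_lambda _ fun j =>
      measurable_Phi_entry T hT F hFmeas n i j
  have h2 : Measurable fun p : ℂ × Ω => opNormC (Phi T F p.2 n p.1) :=
    (matNormFun_continuous.measurable).comp h1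
  exact Real.measurable_log.comp h2

theorem stmt10 {Ω : Type*} [MeasureSpace Ω] [IsProbabilityMeasure (ℙ : Measure Ω)]
    {W : ℕ} (hW : 1 ≤ W) (T : Ω → Ω) (hT : MeasurePreserving T ℙ ℙ)
    (F : Ω → Matrix (Fin W) (Fin W) ℝ)
    (hFmeas : ∀ i j, Measurable fun ω => F ω i j)
    (hFsymm : ∀ ω, (F ω).IsSymm)
    (hFint : Integrable (fun ω => max (Real.log (opNormR (F ω))) 0) ℙ)
    (gamma : ℂ → ℝ) (hnn : ∀ z, 0 ≤ gamma z)
    (hgamma : ∀ z : ℂ, Filter.Tendsto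
      (fun n : ℕ => (∫ ω, Real.log (opNormC (Phi T F ω n z)) ∂ℙ) / (n : ℝ))
      Filter.atTop (nhds (gamma z))) :
    ∀ φ : ℂ → ℝ, ContDiff ℝ (⊤ : ℕ∞) φ → HasCompactSupport φ →
      Filter.Tendsto
        (fun n : ℕ => ∫ z : ℂ,
          ((∫ ω, Real.log (opNormC (Phi T F ω n z)) ∂ℙ) / (n : ℝ)) * φ z)
        Filter.atTop
        (nhds (∫ z : ℂ, gamma z * φ z)) := by
  intro φ hφ hφc
  have hW1 : (1:ℝ) ≤ (2 * W : ℝ)^2 := by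
    have : (1:ℝ) ≤ (W:ℝ) := by exact_mod_cast hW
    nlinarith
  set K : ℂ → ℝ := fun z => Real.log ((2 * W : ℝ)^2 * 2 * (‖z‖ + 1)) with hKdef
  set Lp : Ω → ℝ := fun ω => max (Real.log (opNormR (F ω))) 0 with hLpdef
  set I0 : ℝ := ∫ ω, Lp ω ∂ℙ with hI0def
  have hLp_nonneg : ∀ ω, 0 ≤ Lp ω := fun ω => le_max_right _ _
  have hI0 : 0 ≤ I0 := integral_nonneg hLp_nonneg
  have hK0 : ∀ z, 0 ≤ K z := by
    intro z
    apply Real.log_nonneg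
    nlinarith [norm_nonneg z]
  have hKcont : Continuous K := by
    apply Continuous.log
    · exact continuous_const.mul (continuous_norm.add continuous_const)
    · intro z
      have : (0:ℝ) < (2 * W : ℝ)^2 * 2 * (‖z‖ + 1) := by nlinarith [norm_nonneg z]
      exact ne_of_gt this
  have hLpm : ∀ m : ℕ, Integrable (fun ω => Lp (T^[m] ω)) ℙ := fun m =>
    ((hT.iterate m).integrable_comp hFint.1).mpr hFint
  have hLpm_int : ∀ m : ℕ, ∫ ω, Lp (T^[m] ω) ∂ℙ = I0 := by
    intro m
    have hmp := hT.iterate m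
    have hsm : AEStronglyMeasurable Lp (Measure.map (T^[m]) ℙ) := by
      rw [hmp.map_eq]; exact hFint.1
    calc ∫ ω, Lp (T^[m] ω) ∂ℙ = ∫ y, Lp y ∂(Measure.map (T^[m]) ℙ) :=
          (integral_map hmp.measurable.aemeasurable hsm).symm
      _ = I0 := by rw [hmp.map_eq]
  have hmeasω : ∀ (n : ℕ) (z : ℂ), Measurable fun ω => Real.log (opNormC (Phi T F ω n z)) := by
    intro n z
    have h := (measurable_logPhi T hT.measurable F hFmeas n).comp
      (measurable_prodMk_left (x := z))
    exact h
  have hGint : ∀ (n : ℕ) (z : ℂ),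
      Integrable (fun ω => ∑ m ∈ Finset.range n, (K z + Lp (T^[m+1] ω))) ℙ :=
    fun n z => integrable_finset_sum _ fun m _ => (integrable_const _).add (hLpm (m+1))
  have hIntLog : ∀ (n : ℕ) (z : ℂ),
      Integrable (fun ω => Real.log (opNormC (Phi T F ω n z))) ℙ := by
    intro n z
    refine Integrable.mono' (hGint n z) ((hmeasω n z).aestronglyMeasurable)
      (Filter.Eventually.of_forall fun ω => ?_)
    rw [Real.norm_eq_abs, abs_of_nonneg (Real.log_nonneg (one_le_opN_Phi T hW F hFsymm ω n z))]
    exact log_Phi_le T hW F hFsymm ω z n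
  have hlow : ∀ (n : ℕ) (z : ℂ), 0 ≤ ∫ ω, Real.log (opNormC (Phi T F ω n z)) ∂ℙ := fun n z =>
    integral_nonneg fun ω => Real.log_nonneg (one_le_opN_Phi T hW F hFsymm ω n z)
  have hup : ∀ (n : ℕ) (z : ℂ),
      ∫ ω, Real.log (opNormC (Phi T F ω n z)) ∂ℙ ≤ n * (K z + I0) := by
    intro n z
    calc ∫ ω, Real.log (opNormC (Phi T F ω n z)) ∂ℙ
        ≤ ∫ ω, ∑ m ∈ Finset.range n, (K z + Lp (T^[m+1] ω)) ∂ℙ :=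
          integral_mono (hIntLog n z) (hGint n z) (fun ω => log_Phi_le T hW F hFsymm ω z n)
      _ = ∑ m ∈ Finset.range n, ∫ ω, (K z + Lp (T^[m+1] ω)) ∂ℙ :=
          integral_finset_sum _ fun m _ => (integrable_const _).add (hLpm (m+1))
      _ = ∑ _m ∈ Finset.range n, (K z + I0) := by
          refine Finset.sum_congr rfl fun m _ => ?_
          rw [integral_add (integrable_const _) (hLpm (m+1)), integral_const, hLpm_int (m+1)]
          simp [measure_univ]
      _ = n * (K z + I0) := by
          rw [Finset.sum_const, Finset.card_range, nsmul_eq_mul]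
  have hSM : ∀ n : ℕ, AEStronglyMeasurable
      (fun z : ℂ => ((∫ ω, Real.log (opNormC (Phi T F ω n z)) ∂ℙ) / (n : ℝ)) * φ z) volume := by
    intro n
    have h1 : StronglyMeasurable fun z : ℂ => ∫ ω, Real.log (opNormC (Phi T F ω n z)) ∂ℙ :=
      (measurable_logPhi T hT.measurable F hFmeas n).stronglyMeasurable.integral_prod_right'
    exact ((h1.measurable.div_const _).mul hφ.continuous.measurable).aestronglyMeasurable
  have hb_int : Integrable (fun z : ℂ => (K z + I0) * |φ z|) volume := by
    apply Continuous.integrable_of_hasCompactSupport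
    · exact (hKcont.add continuous_const).mul hφ.continuous.abs
    · exact HasCompactSupport.mul_left hφc.abs
  have hbd : ∀ n : ℕ, ∀ᵐ z : ℂ,
      ‖((∫ ω, Real.log (opNormC (Phi T F ω n z)) ∂ℙ) / (n : ℝ)) * φ z‖
        ≤ (K z + I0) * |φ z| := by
    intro n
    refine Filter.Eventually.of_forall fun z => ?_
    rw [Real.norm_eq_abs, abs_mul]
    refine mul_le_mul_of_nonneg_right ?_ (abs_nonneg _)
    cases n with
    | zero =>
        simp only [Nat.cast_zero, div_zero, abs_zero]
        exact add_nonneg (hK0 z) hI0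
    | succ n =>
        have hpos : (0:ℝ) < ((n+1 : ℕ) : ℝ) := by positivity
        rw [abs_of_nonneg (div_nonneg (hlow (n+1) z) (le_of_lt hpos))]
        rw [div_le_iff₀ hpos]
        calc ∫ ω, Real.log (opNormC (Phi T F ω (n+1) z)) ∂ℙ
            ≤ ((n+1 : ℕ) : ℝ) * (K z + I0) := hup (n+1) z
          _ = (K z + I0) * ((n+1 : ℕ) : ℝ) := by ring
  have hlim : ∀ᵐ z : ℂ, Filter.Tendsto
      (fun n : ℕ => ((∫ ω, Real.log (opNormC (Phi T F ω n z)) ∂ℙ) / (n : ℝ)) * φ z)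
      Filter.atTop (nhds (gamma z * φ z)) :=
    Filter.Eventually.of_forall fun z => (hgamma z).mul_const (φ z)
  exact tendsto_integral_of_dominated_convergence _ hSM hb_int hbd hlim
end
end

section
/- Let μ be a probability measure on ℂ such that ∫ log₊ |w| dμ(w) < ∞ and such that for every z ∈ ℂ the logarithmic potential satisfies ∫ log |z − w| dμ(w) ≥ 0 (in particular the integral is well defined and > −∞). Then there exists a constant C < ∞ such that for every z ∈ ℂ and every r ∈ (0, 1/e], μ(B(z, r)) · log(1/r) ≤ C (1 + log₊ |z|), where B(z,r) is the ball of radius r centred at z. -/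
open MeasureTheory Real

/-!
Split the potential `U(z) = ∫ log ‖z - w‖ dμ(w) ≥ 0` over the ball `B = B(z, r)` and its complement.
On `B` the integrand is at most `log r`, while on the complement it is at most
`log⁺ ‖z - w‖ ≤ log⁺ ‖z‖ + log⁺ ‖w‖ + log 2`. Hence
`0 ≤ μ(B) log r + log⁺ ‖z‖ + ∫ log⁺ ‖w‖ dμ + log 2`, which is the claim.
The bound on `B` needs `μ {z} = 0` (Lean's `log 0 = 0`); this follows from the same estimate applied
with `B = {z₀}` at the points `z₀ + t`, `t → 0`, where it would force `μ {z₀} log (1/t)` to stay bounded.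
-/

theorem integral_le_measureReal_mul_add_integral_posPart {α : Type*} [MeasurableSpace α]
    {μ : Measure α} [IsFiniteMeasure μ] {f : α → ℝ} {s : Set α} {c : ℝ}
    (hf : Integrable f μ) (hs : MeasurableSet s) (hfs : ∀ᵐ x ∂μ.restrict s, f x ≤ c) :
    ∫ x, f x ∂μ ≤ μ.real s * c + ∫ x, max (f x) 0 ∂μ := by
  rw [← integral_add_compl hs hf]
  calc ∫ x in s, f x ∂μ + ∫ x in sᶜ, f x ∂μ
      ≤ ∫ _ in s, c ∂μ + ∫ x in sᶜ, max (f x) 0 ∂μ := by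
        exact add_le_add (integral_mono_ae hf.integrableOn (integrable_const c) hfs)
          (setIntegral_mono hf.integrableOn hf.pos_part.integrableOn fun x => le_max_left _ _)
    _ ≤ μ.real s * c + ∫ x, max (f x) 0 ∂μ := by
        rw [setIntegral_const, smul_eq_mul]
        exact add_le_add_right
          (setIntegral_le_integral hf.pos_part (.of_forall fun x => le_max_right _ _)) _

section LogPotential

variable {μ : Measure ℂ} [IsProbabilityMeasure μ]

theorem integral_posLog_norm_sub_le (h1 : Integrable (fun w => log⁺ ‖w‖) μ) (z : ℂ) :
    ∫ w, log⁺ ‖z - w‖ ∂μ ≤ log⁺ ‖z‖ + ∫ w, log⁺ ‖w‖ ∂μ + log 2 := by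
  calc ∫ w, log⁺ ‖z - w‖ ∂μ ≤ ∫ w, (log⁺ ‖z‖ + log⁺ ‖w‖ + log 2) ∂μ := by
        refine integral_mono_of_nonneg (.of_forall fun w => posLog_nonneg)
          (((integrable_const _).add h1).add (integrable_const _)) (.of_forall fun w => ?_)
        simpa [sub_eq_add_neg] using posLog_norm_add_le z (-w)
    _ = log⁺ ‖z‖ + ∫ w, log⁺ ‖w‖ ∂μ + log 2 := by
        rw [integral_add (f := fun w => log⁺ ‖z‖ + log⁺ ‖w‖) ((integrable_const _).add h1)
          (integrable_const _), integral_add (integrable_const _) h1]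
        simp only [integral_const, probReal_univ, one_smul]

theorem measureReal_mul_log_inv_le (h1 : Integrable (fun w => log⁺ ‖w‖) μ) {z : ℂ}
    (hz_int : Integrable (fun w => log ‖z - w‖) μ) (hz : 0 ≤ ∫ w, log ‖z - w‖ ∂μ)
    {s : Set ℂ} (hs : MeasurableSet s) {t : ℝ}
    (hst : ∀ᵐ w ∂μ.restrict s, log ‖z - w‖ ≤ log t) :
    μ.real s * log t⁻¹ ≤ log⁺ ‖z‖ + ∫ w, log⁺ ‖w‖ ∂μ + log 2 := by
  have hsplit := integral_le_measureReal_mul_add_integral_posPart hz_int hs hst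
  have hposPart : ∫ w, max (log ‖z - w‖) 0 ∂μ = ∫ w, log⁺ ‖z - w‖ ∂μ := by
    simp only [posLog_apply, max_comm]
  rw [log_inv]
  linarith [integral_posLog_norm_sub_le h1 z]

theorem measure_singleton_eq_zero_of_logPotential_nonneg
    (h1 : Integrable (fun w => log⁺ ‖w‖) μ)
    (h2 : ∀ z : ℂ, Integrable (fun w => log ‖z - w‖) μ)
    (h3 : ∀ z : ℂ, 0 ≤ ∫ w, log ‖z - w‖ ∂μ) (z₀ : ℂ) :
    μ {z₀} = 0 := by
  set K := log⁺ (‖z₀‖ + 1) + ∫ w, log⁺ ‖w‖ ∂μ + log 2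
  have hbound : ∀ x : ℝ, 0 ≤ x → μ.real {z₀} * x ≤ K := by
    intro x hx
    have hnorm : ‖((rexp (-x) : ℝ) : ℂ)‖ = rexp (-x) := by
      rw [Complex.norm_real, norm_of_nonneg (exp_pos _).le]
    have hmass := measureReal_mul_log_inv_le h1 (h2 _) (h3 _) (measurableSet_singleton z₀)
      (t := rexp (-x)) (ae_restrict_of_forall_mem (measurableSet_singleton z₀) fun w hw => by
        rw [Set.mem_singleton_iff.mp hw, add_sub_cancel_left, hnorm])
    have hfar : log⁺ ‖z₀ + rexp (-x)‖ ≤ log⁺ (‖z₀‖ + 1) := by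
      refine posLog_le_posLog (norm_nonneg _) ((norm_add_le _ _).trans ?_)
      rw [hnorm]
      gcongr
      exact exp_le_one_iff.mpr (neg_nonpos.mpr hx)
    rw [← exp_neg, neg_neg, log_exp] at hmass
    linarith
  have hK : 0 ≤ K := by
    have hI : 0 ≤ ∫ w, log⁺ ‖w‖ ∂μ := integral_nonneg fun w => posLog_nonneg
    linarith [posLog_nonneg (x := ‖z₀‖ + 1), log_nonneg one_le_two]
  by_contra hne
  have hp : 0 < μ.real {z₀} := ENNReal.toReal_pos hne (measure_ne_top μ _)
  have hcontra := hbound ((K + 1) / μ.real {z₀}) (by positivity)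
  rw [mul_div_cancel₀ _ hp.ne'] at hcontra
  linarith

end LogPotential

theorem stmt14 (μ : Measure ℂ) [IsProbabilityMeasure μ]
    (h1 : Integrable (fun w => max (Real.log (‖w‖)) 0) μ)
    (h2 : ∀ z : ℂ, Integrable (fun w => Real.log (‖z - w‖)) μ)
    (h3 : ∀ z : ℂ, 0 ≤ ∫ w, Real.log (‖z - w‖) ∂μ) :
    ∃ C : ℝ, ∀ z : ℂ, ∀ r : ℝ, 0 < r → r ≤ (Real.exp 1)⁻¹ →
      (μ (Metric.ball z r)).toReal * Real.log (1 / r) ≤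
        C * (1 + max (Real.log (‖z‖)) 0) := by
  simp only [max_comm _ (0 : ℝ), ← posLog_apply] at h1 ⊢
  set I := ∫ w, log⁺ ‖w‖ ∂μ
  have hI : 0 ≤ I := integral_nonneg fun w => posLog_nonneg
  refine ⟨1 + log 2 + I, fun z r _ _ => ?_⟩
  have hne : ∀ᵐ w ∂μ, w ∉ ({z} : Set ℂ) := measure_eq_zero_iff_ae_notMem.mp
    (measure_singleton_eq_zero_of_logPotential_nonneg h1 h2 h3 z)
  have hball : ∀ᵐ w ∂μ.restrict (Metric.ball z r), log ‖z - w‖ ≤ log r := by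
    filter_upwards [ae_restrict_of_ae hne, ae_restrict_mem measurableSet_ball] with w hwz hwr
    rw [Metric.mem_ball, dist_comm, dist_eq_norm] at hwr
    exact log_le_log (norm_pos_iff.mpr (sub_ne_zero.mpr (Ne.symm hwz))) hwr.le
  have hmass := measureReal_mul_log_inv_le h1 (h2 z) (h3 z) measurableSet_ball hball
  rw [one_div, ← measureReal_def]
  nlinarith [posLog_nonneg (x := ‖z‖), log_nonneg one_le_two]
end

section
/- Let ρ : [0, ∞) → [0, ∞) be non-decreasing with ρ(0) = 0 and ∫₀¹ (ρ(t)/t) dt < ∞. Then for all constants c > 0 and τ > 0, the series ∑_{i=1}^{∞} e^{τ i} · ρ( exp(−c e^{τ i}) ) converges. -/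
/-!
Put `b i = exp (-c e^{τ i})`, a sequence decreasing from `b 0 ≤ 1` to `0`. On `(b (i+1), b i]`
monotonicity gives `∫ ρ(t)/t ≥ ρ(b (i+1)) log (b i / b (i+1))`, and
`log (b i / b (i+1)) = c (1 - e^{-τ}) e^{τ (i+1)}`. So the `(i+1)`-st term of the series is bounded
by a constant times the integral of `ρ(t)/t` over `(b (i+1), b i]`; these intervals are disjoint
subintervals of `(0, 1]`, so the integrals form a summable series.
-/

open MeasureTheory Set Real

theorem Antitone.summable_setIntegral_Ioc_succ {α E : Type*} [LinearOrder α] [TopologicalSpace α]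
    [OrderClosedTopology α] [MeasurableSpace α] [OpensMeasurableSpace α] [NormedAddCommGroup E]
    [NormedSpace ℝ E] {μ : Measure α} {f : α → E} {b : ℕ → α} {s : Set α} (hb : Antitone b)
    (hf : IntegrableOn f s μ) (hs : ∀ i, Ioc (b (i + 1)) (b i) ⊆ s) :
    Summable fun i => ∫ t in Ioc (b (i + 1)) (b i), f t ∂μ := by
  have hdisj : Pairwise (Function.onFun Disjoint fun i => Ioc (b (i + 1)) (b i)) := by
    simpa only [Order.succ_eq_add_one] using hb.pairwise_disjoint_on_Ioc_succ
  exact (hasSum_integral_iUnion (fun _ => measurableSet_Ioc) hdisj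
    (hf.mono_set (iUnion_subset hs))).summable

theorem mul_log_div_le_setIntegral_div {ρ : ℝ → ℝ} {a b : ℝ} (ha : 0 < a) (hab : a ≤ b)
    (hρ : ∀ t ∈ Ioc a b, ρ a ≤ ρ t) (hint : IntegrableOn (fun t => ρ t / t) (Ioc a b)) :
    ρ a * log (b / a) ≤ ∫ t in Ioc a b, ρ t / t := by
  have h0 : (0 : ℝ) ∉ uIcc a b := fun h => by
    rw [uIcc_of_le hab] at h
    exact ha.not_ge h.1
  have hinv : IntegrableOn (fun t => ρ a / t) (Ioc a b) := by
    refine (ContinuousOn.integrableOn_Icc ?_).mono_set Ioc_subset_Icc_self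
    exact continuousOn_const.div continuousOn_id fun t ht => (ha.trans_le ht.1).ne'
  calc ρ a * log (b / a) = ∫ t in Ioc a b, ρ a / t := by
        simp only [div_eq_mul_inv (ρ a), ← intervalIntegral.integral_of_le hab,
          intervalIntegral.integral_const_mul, integral_inv h0]
    _ ≤ ∫ t in Ioc a b, ρ t / t := setIntegral_mono_on hinv hint measurableSet_Ioc fun t ht =>
        div_le_div_of_nonneg_right (hρ t ht) (ha.trans ht.1).le

theorem antitone_exp_neg_mul_exp {c τ : ℝ} (hc : 0 ≤ c) (hτ : 0 ≤ τ) :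
    Antitone fun i : ℕ => exp (-c * exp (τ * i)) := fun i j hij => by
  have : exp (τ * i) ≤ exp (τ * j) := exp_le_exp.2 (by gcongr)
  exact exp_le_exp.2 (by nlinarith)

theorem log_div_exp_neg_mul_exp_succ (c τ x : ℝ) :
    log (exp (-c * exp (τ * x)) / exp (-c * exp (τ * (x + 1)))) =
      c * (1 - exp (-τ)) * exp (τ * (x + 1)) := by
  rw [← exp_sub, log_exp, show τ * x = τ * (x + 1) + -τ by ring, exp_add]
  ring

theorem stmt16_general (ρ : ℝ → ℝ)
    (hmono : ∀ s t : ℝ, 0 ≤ s → s ≤ t → ρ s ≤ ρ t)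
    (hnn : ∀ t : ℝ, 0 ≤ t → 0 ≤ ρ t)
    (hdini : IntegrableOn (fun t => ρ t / t) (Set.Ioc (0:ℝ) 1)) :
    ∀ c τ : ℝ, 0 < c → 0 < τ →
      Summable (fun i : ℕ =>
        Real.exp (τ * i) * ρ (Real.exp (-c * Real.exp (τ * i)))) := by
  intro c τ hc hτ
  set b : ℕ → ℝ := fun i => exp (-c * exp (τ * i))
  have hb : Antitone b := antitone_exp_neg_mul_exp hc.le hτ.le
  have hb_le_one : b 0 ≤ 1 := by simp [b, hc.le]
  have hsub : ∀ i, Ioc (b (i + 1)) (b i) ⊆ Ioc 0 1 := fun i =>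
    Ioc_subset_Ioc (exp_pos _).le ((hb (Nat.zero_le i)).trans hb_le_one)
  have hK : 0 < c * (1 - exp (-τ)) := mul_pos hc (by simpa using hτ)
  have hbound : ∀ i : ℕ, exp (τ * ↑(i + 1)) * ρ (b (i + 1)) ≤
      (c * (1 - exp (-τ)))⁻¹ * ∫ t in Ioc (b (i + 1)) (b i), ρ t / t := by
    intro i
    rw [le_inv_mul_iff₀ hK]
    calc c * (1 - exp (-τ)) * (exp (τ * ↑(i + 1)) * ρ (b (i + 1)))
        = ρ (b (i + 1)) * log (b i / b (i + 1)) := by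
          rw [show log (b i / b (i + 1)) = c * (1 - exp (-τ)) * exp (τ * ↑(i + 1)) by
            simpa only [b, Nat.cast_succ] using log_div_exp_neg_mul_exp_succ c τ i]
          ring
      _ ≤ _ := mul_log_div_le_setIntegral_div (exp_pos _) (hb i.le_succ)
          (fun t ht => hmono _ _ (exp_pos _).le ht.1.le) (hdini.mono_set (hsub i))
  rw [← summable_nat_add_iff 1]
  exact ((hb.summable_setIntegral_Ioc_succ hdini hsub).mul_left _).of_nonneg_of_le
    (fun i => mul_nonneg (exp_pos _).le (hnn _ (exp_pos _).le)) hbound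

theorem stmt16 (ρ : ℝ → ℝ)
    (hmono : ∀ s t : ℝ, 0 ≤ s → s ≤ t → ρ s ≤ ρ t)
    (h0 : ρ 0 = 0) (hnn : ∀ t : ℝ, 0 ≤ t → 0 ≤ ρ t)
    (hdini : IntegrableOn (fun t => ρ t / t) (Set.Ioc (0:ℝ) 1)) :
    ∀ c τ : ℝ, 0 < c → 0 < τ →
      Summable (fun i : ℕ =>
        Real.exp (τ * i) * ρ (Real.exp (-c * Real.exp (τ * i)))) :=
  stmt16_general ρ hmono hnn hdini
end
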